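/- arXiv:2304.04127 — 5 statements merged into one kernel-verified Lean document; each statement's English description precedes it below -/
import Mathlib

section
/- Let $w$ be a positive weight function on an interval $I$ with finite moments of all orders. Then the multiple integral $\frac{1}{n!}\int_{I^n}\prod_{1\le j<k\le n}(x_j-x_k)^2\prod_{\ell=1}^n w(x_\ell)\,dx_1\cdots dx_n$ equals the Hankel determinant $\det\left(\int_I x^{i+j}w(x)\,dx\right)_{i,j=0}^{n-1}$. -/
/-!
Write the integrand as `∏_{j<k} (x_j - x_k)² ∏ w(x_ℓ) = det[x_j^i] · det[x_j^i w(x_j)]`.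
Expanding both determinants by the Leibniz formula turns it into a signed sum of products of
one-variable functions, so Fubini integrates it termwise into
`∑_{σ,τ} sign σ sign τ ∏_ℓ m_{σ ℓ + τ ℓ}` with `m_k = ∫ x^k w`. Reindexing by `σ τ⁻¹` shows that
each of the `n!` choices of `τ` contributes the Leibniz expansion of the Hankel determinant
`det (m_{i+j})` (Andréief's identity).
-/

open MeasureTheory Finset Equiv

theorem Matrix.sum_sign_mul_sign_mul_prod_eq_factorial_mul_det {ι R : Type*} [Fintype ι]
    [DecidableEq ι] [CommRing R] (M : Matrix ι ι R) :
    ∑ σ : Perm ι, ∑ τ : Perm ι,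
        ((Perm.sign σ : ℤ) : R) * ((Perm.sign τ : ℤ) : R) * ∏ i, M (σ i) (τ i) =
      ((Fintype.card ι).factorial : R) * M.det := by
  have inner_sum (τ : Perm ι) :
      ∑ σ : Perm ι, ((Perm.sign σ : ℤ) : R) * ((Perm.sign τ : ℤ) : R) *
        ∏ i, M (σ i) (τ i) = M.det := by
    rw [Matrix.det_apply', ← Equiv.sum_comp (Equiv.mulRight τ)]
    refine sum_congr rfl fun ρ _ => ?_
    have sign_eq : ((Perm.sign (ρ * τ) : ℤ) : R) * ((Perm.sign τ : ℤ) : R) =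
        ((Perm.sign ρ : ℤ) : R) := by
      rw [← Int.cast_mul, ← Units.val_mul, Perm.sign_mul, mul_assoc, Int.units_mul_self,
        mul_one]
    simp only [coe_mulRight, sign_eq, Perm.mul_apply]
    rw [← Equiv.prod_comp τ (fun i => M (ρ i) i)]
  rw [sum_comm, sum_congr rfl fun τ _ => inner_sum τ, sum_const, card_univ,
    Fintype.card_perm, nsmul_eq_mul]

theorem integral_det_mul_det_eq_factorial_mul_det {ι α 𝕜 : Type*} [Fintype ι] [DecidableEq ι]
    [RCLike 𝕜] [MeasurableSpace α] (μ : Measure α) [SigmaFinite μ] (f g : ι → α → 𝕜)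
    (hfg : ∀ i j, Integrable (fun x => f i x * g j x) μ) :
    ∫ x : ι → α, (Matrix.of fun i j => f i (x j)).det * (Matrix.of fun i j => g i (x j)).det
        ∂(Measure.pi fun _ => μ) =
      ((Fintype.card ι).factorial : 𝕜) * (Matrix.of fun i j => ∫ x, f i x * g j x ∂μ).det := by
  have leibniz_expand (x : ι → α) :
      (Matrix.of fun i j => f i (x j)).det * (Matrix.of fun i j => g i (x j)).det =
        ∑ σ : Perm ι, ∑ τ : Perm ι, ((Perm.sign σ : ℤ) : 𝕜) * ((Perm.sign τ : ℤ) : 𝕜) *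
          ∏ ℓ, f (σ ℓ) (x ℓ) * g (τ ℓ) (x ℓ) := by
    simp only [Matrix.det_apply', Matrix.of_apply, sum_mul_sum, prod_mul_distrib]
    exact sum_congr rfl fun σ _ => sum_congr rfl fun τ _ => by ring
  have term_integrable (σ τ : Perm ι) :
      Integrable (fun x : ι → α => ∏ ℓ, f (σ ℓ) (x ℓ) * g (τ ℓ) (x ℓ))
        (Measure.pi fun _ => μ) :=
    Integrable.fintype_prod fun ℓ => hfg (σ ℓ) (τ ℓ)
  simp_rw [leibniz_expand]
  rw [integral_finsetSum _ fun σ _ => integrable_finsetSum _ fun τ _ =>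
    (term_integrable σ τ).const_mul _]
  calc
    _ = ∑ σ : Perm ι, ∑ τ : Perm ι, ((Perm.sign σ : ℤ) : 𝕜) * ((Perm.sign τ : ℤ) : 𝕜) *
          ∏ ℓ, ∫ x, f (σ ℓ) x * g (τ ℓ) x ∂μ := by
      refine sum_congr rfl fun σ _ => ?_
      rw [integral_finsetSum _ fun τ _ => (term_integrable σ τ).const_mul _]
      refine sum_congr rfl fun τ _ => ?_
      rw [integral_const_mul]
      congr 1
      exact integral_fintype_prod_eq_prod (fun ℓ x => f (σ ℓ) x * g (τ ℓ) x)
    _ = _ := by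
      rw [← Matrix.sum_sign_mul_sign_mul_prod_eq_factorial_mul_det]
      simp only [Matrix.of_apply]

theorem Finset.prod_filter_lt_eq_prod_prod_Ioi {ι M : Type*} [Fintype ι] [LinearOrder ι]
    [LocallyFiniteOrderTop ι] [CommMonoid M] (f : ι → ι → M) :
    ∏ p ∈ univ.filter (fun p : ι × ι => p.1 < p.2), f p.1 p.2 = ∏ i, ∏ j ∈ Ioi i, f i j := by
  rw [prod_sigma']
  exact prod_bij' (fun p _ => ⟨p.1, p.2⟩) (fun p _ => (p.1, p.2)) (by simp) (by simp)
    (by simp) (by simp) (by simp)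

theorem Matrix.prod_filter_lt_sub_sq_eq_det_vandermonde_sq {R : Type*} [CommRing R] {n : ℕ}
    (x : Fin n → R) :
    ∏ p ∈ univ.filter (fun p : Fin n × Fin n => p.1 < p.2), (x p.1 - x p.2) ^ 2 =
      (vandermonde x).det ^ 2 := by
  rw [prod_filter_lt_eq_prod_prod_Ioi (fun i j => (x i - x j) ^ 2), det_vandermonde,
    ← prod_pow]
  refine prod_congr rfl fun i _ => ?_
  rw [← prod_pow]
  exact prod_congr rfl fun j _ => by ring

theorem sq_vandermonde_mul_prod_eq_det_mul_det {n : ℕ} (w : ℝ → ℝ) (x : Fin n → ℝ) :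
    (∏ p ∈ univ.filter (fun p : Fin n × Fin n => p.1 < p.2), (x p.1 - x p.2) ^ 2) *
        ∏ ℓ, w (x ℓ) =
      (Matrix.of fun i j : Fin n => x j ^ (i : ℕ)).det *
        (Matrix.of fun i j : Fin n => x j ^ (i : ℕ) * w (x j)).det := by
  have vandermonde_transpose : (Matrix.of fun i j : Fin n => x j ^ (i : ℕ)).det =
      (Matrix.vandermonde x).det :=
    Matrix.det_transpose _
  have weighted : (Matrix.of fun i j : Fin n => x j ^ (i : ℕ) * w (x j)).det =
      (∏ ℓ, w (x ℓ)) * (Matrix.vandermonde x).det := by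
    rw [← vandermonde_transpose, ← Matrix.det_mul_row]
    simp only [Matrix.of_apply, mul_comm]
  rw [Matrix.prod_filter_lt_sub_sq_eq_det_vandermonde_sq, vandermonde_transpose, weighted]
  ring

theorem integral_sq_vandermonde_mul_prod_eq_factorial_mul_det_hankel (n : ℕ) (μ : Measure ℝ)
    [SigmaFinite μ] (w : ℝ → ℝ) (hw : ∀ k : ℕ, Integrable (fun x => x ^ k * w x) μ) :
    ∫ x : Fin n → ℝ,
        (∏ p ∈ univ.filter (fun p : Fin n × Fin n => p.1 < p.2), (x p.1 - x p.2) ^ 2) *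
          ∏ ℓ, w (x ℓ) ∂(Measure.pi fun _ => μ) =
      (n.factorial : ℝ) *
        (Matrix.of fun i j : Fin n => ∫ x, x ^ ((i : ℕ) + (j : ℕ)) * w x ∂μ).det := by
  have moment_eq (i j : ℕ) (x : ℝ) : x ^ i * (x ^ j * w x) = x ^ (i + j) * w x := by ring
  simp_rw [sq_vandermonde_mul_prod_eq_det_mul_det]
  rw [integral_det_mul_det_eq_factorial_mul_det μ (fun (i : Fin n) x => x ^ (i : ℕ))
    (fun j x => x ^ (j : ℕ) * w x) fun i j => by simpa only [moment_eq] using hw _]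
  simp only [moment_eq, Fintype.card_fin]

theorem heine_formula_general (n : ℕ) (I : Set ℝ)
    (w : ℝ → ℝ)
    (hw_mom : ∀ k : ℕ, IntegrableOn (fun x => |x| ^ k * w x) I) :
    (n.factorial : ℝ)⁻¹ *
      ∫ x in Set.univ.pi (fun _ : Fin n => I),
        (∏ p ∈ Finset.univ.filter (fun p : Fin n × Fin n => p.1 < p.2),
            (x p.1 - x p.2) ^ 2) * ∏ ℓ : Fin n, w (x ℓ) =
    Matrix.det (Matrix.of fun i j : Fin n =>
      ∫ x in I, x ^ ((i : ℕ) + (j : ℕ)) * w x) := by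
  have w_aesm : AEStronglyMeasurable w (volume.restrict I) := by
    simpa only [pow_zero, one_mul] using (hw_mom 0).aestronglyMeasurable
  have moment_integrable (k : ℕ) : IntegrableOn (fun x => x ^ k * w x) I :=
    (hw_mom k).congr' ((continuous_pow k).aestronglyMeasurable.mul w_aesm)
      (ae_of_all _ fun x => by simp only [norm_mul, norm_pow, Real.norm_eq_abs, abs_abs])
  rw [volume_pi, Measure.restrict_pi_pi,
    integral_sq_vandermonde_mul_prod_eq_factorial_mul_det_hankel n _ w moment_integrable,
    inv_mul_cancel_left₀ (by exact_mod_cast n.factorial_ne_zero)]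

/-- Heine's formula (Andréief identity): the multiple integral of the squared
Vandermonde times the weight equals the Hankel determinant of moments. -/
theorem heine_formula (n : ℕ) (hn : 1 ≤ n) (I : Set ℝ) (hI : MeasurableSet I)
    (w : ℝ → ℝ) (hw_meas : Measurable w) (hw_pos : ∀ x ∈ I, 0 < w x)
    (hw_mom : ∀ k : ℕ, IntegrableOn (fun x => |x| ^ k * w x) I) :
    (n.factorial : ℝ)⁻¹ *
      ∫ x in Set.univ.pi (fun _ : Fin n => I),
        (∏ p ∈ Finset.univ.filter (fun p : Fin n × Fin n => p.1 < p.2),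
            (x p.1 - x p.2) ^ 2) * ∏ ℓ : Fin n, w (x ℓ) =
    Matrix.det (Matrix.of fun i j : Fin n =>
      ∫ x in I, x ^ ((i : ℕ) + (j : ℕ)) * w x) :=
  heine_formula_general n I w hw_mom
end

section
/- Suppose functions $A_n(z), B_n(z)$ (rational in $z$, depending on $n$) satisfy $(S_1)$: $B_{n+1}(z)+B_n(z)=(z-\alpha_n)A_n(z)-\mathrm{v}_0'(z)$ and $(S_2)$: $1+(z-\alpha_n)(B_{n+1}(z)-B_n(z))=\beta_{n+1}A_{n+1}(z)-\beta_n A_{n-1}(z)$ for all $n\ge 0$, with $B_0(z)=0$ and $A_{-1}(z)=0$. Then the summed condition $(S_2')$ holds: $B_n^2(z)+\mathrm{v}_0'(z)B_n(z)+\sum_{j=0}^{n-1}A_j(z)=\beta_n A_n(z)A_{n-1}(z)$ for all $n\ge 0$. -/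
/-- From the compatibility conditions `(S₁)` and `(S₂)` (with `B_0 = 0`,
`β_0 = 0`, and `A_{-1}` encoded via truncated subtraction killed by `β_0 = 0`),
the summed condition `(S₂')` follows. -/
theorem S2_primed (α β : ℕ → ℝ) (hβ0 : β 0 = 0) (v0' : ℝ → ℝ)
    (A B : ℕ → ℝ → ℝ) (hB0 : ∀ z, B 0 z = 0)
    (hS1 : ∀ n z, B (n + 1) z + B n z = (z - α n) * A n z - v0' z)
    (hS2 : ∀ n z, 1 + (z - α n) * (B (n + 1) z - B n z) =
      β (n + 1) * A (n + 1) z - β n * A (n - 1) z) :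
    ∀ n z, (B n z) ^ 2 + v0' z * B n z + ∑ j ∈ Finset.range n, A j z =
      β n * A n z * A (n - 1) z := by
  intro n
  induction n with
  | zero => intro z; simp [hB0, hβ0]
  | succ n ih =>
    intro z
    rw [Finset.sum_range_succ]
    have h1 := hS1 n z
    have h2 := hS2 n z
    have := ih z
    simp only [Nat.add_sub_cancel]
    linear_combination this + A n z * h2 + (B (n+1) z - B n z) * h1
end

section
/- Suppose the Riccati equations hold: $\mathcal{L}R_{n,k}=(\sum_j R_{n,j}-2t_k)R_{n,k}+4r_{n,k}$ and $\mathcal{L}r_{n,k}=\frac{2r_{n,k}^2}{R_{n,k}}-(\sum_j r_{n,j}+n)R_{n,k}$, for $k=1,\dots,m$, with $R_{n,k}\ne 0$, where $\mathcal{L}=\sum_k\partial/\partial t_k$. Then each $R_{n,k}$ satisfies the second-order PDE $\mathcal{L}^2 R_{n,k}-\frac{(\mathcal{L}R_{n,k})^2}{2R_{n,k}}=R_{n,k}\left[\frac{3}{2}\left(\sum_j R_{n,j}\right)^2-2\sum_j(t_k+t_j)R_{n,j}+2(t_k^2-2n-1)\right]$. -/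
/-- The coupled second-order PDEs (generalized Painlevé IV) for the auxiliary
quantities `R_{n,k}`, obtained from the Riccati equations. Here
`L f t = ∑_k ∂_{t_k} f t` and `L² = L ∘ L`. -/
theorem generalized_painleve_IV (m n : ℕ)
    (R r : Fin m → (Fin m → ℝ) → ℝ)
    (hR : ∀ k, ContDiff ℝ (⊤ : ℕ∞) (R k)) (hr : ∀ k, ContDiff ℝ (⊤ : ℕ∞) (r k))
    (hRne : ∀ k t, R k t ≠ 0)
    (L : ((Fin m → ℝ) → ℝ) → (Fin m → ℝ) → ℝ)
    (hL : ∀ f t, L f t = ∑ k, fderiv ℝ f t (Pi.single k 1))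
    (hRic1 : ∀ k t, L (R k) t = ((∑ j, R j t) - 2 * t k) * R k t + 4 * r k t)
    (hRic2 : ∀ k t, L (r k) t =
      2 * (r k t) ^ 2 / R k t - ((∑ j, r j t) + n) * R k t) :
    ∀ k t, L (L (R k)) t - (L (R k) t) ^ 2 / (2 * R k t) =
      R k t * ((3 / 2) * (∑ j, R j t) ^ 2
        - 2 * (∑ j, (t k + t j) * R j t) + 2 * ((t k) ^ 2 - 2 * n - 1)) := by
  have dR : ∀ j, Differentiable ℝ (R j) := fun j => (hR j).differentiable (by simp)
  have dr : ∀ j, Differentiable ℝ (r j) := fun j => (hr j).differentiable (by simp)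
  have dcoord : ∀ i : Fin m, Differentiable ℝ (fun y : Fin m → ℝ => y i) := fun i =>
    (ContinuousLinearMap.proj (R := ℝ) (φ := fun _ : Fin m => ℝ) i).differentiable
  -- L on sums of functions
  have hLsum : ∀ (f : Fin m → (Fin m → ℝ) → ℝ), (∀ j, Differentiable ℝ (f j)) →
      ∀ x, L (fun y => ∑ j, f j y) x = ∑ j, L (f j) x := by
    intro f hf x
    rw [hL]
    have h1 : fderiv ℝ (fun y => ∑ j, f j y) x = ∑ j, fderiv ℝ (f j) x :=
      fderiv_fun_sum (fun j _ => (hf j).differentiableAt)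
    simp only [h1, ContinuousLinearMap.sum_apply]
    rw [Finset.sum_comm]
    simp only [hL]
  -- L on products
  have hLmul : ∀ (f g : (Fin m → ℝ) → ℝ), Differentiable ℝ f → Differentiable ℝ g →
      ∀ x, L (fun y => f y * g y) x = L f x * g x + f x * L g x := by
    intro f g hf hg x
    rw [hL, hL, hL]
    have h1 : fderiv ℝ (fun y => f y * g y) x
        = f x • fderiv ℝ g x + g x • fderiv ℝ f x :=
      fderiv_mul hf.differentiableAt hg.differentiableAt
    simp only [h1, ContinuousLinearMap.add_apply, ContinuousLinearMap.smul_apply,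
      smul_eq_mul]
    rw [Finset.sum_add_distrib, ← Finset.mul_sum, ← Finset.mul_sum]
    ring
  -- L on additions
  have hLadd : ∀ (f g : (Fin m → ℝ) → ℝ), Differentiable ℝ f → Differentiable ℝ g →
      ∀ x, L (fun y => f y + g y) x = L f x + L g x := by
    intro f g hf hg x
    rw [hL, hL, hL]
    have h1 : fderiv ℝ (fun y => f y + g y) x = fderiv ℝ f x + fderiv ℝ g x :=
      fderiv_add hf.differentiableAt hg.differentiableAt
    simp only [h1, ContinuousLinearMap.add_apply]
    exact Finset.sum_add_distrib
  -- L on subtractions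
  have hLsub : ∀ (f g : (Fin m → ℝ) → ℝ), Differentiable ℝ f → Differentiable ℝ g →
      ∀ x, L (fun y => f y - g y) x = L f x - L g x := by
    intro f g hf hg x
    rw [hL, hL, hL]
    have h1 : fderiv ℝ (fun y => f y - g y) x = fderiv ℝ f x - fderiv ℝ g x :=
      fderiv_sub hf.differentiableAt hg.differentiableAt
    simp only [h1, ContinuousLinearMap.sub_apply]
    exact Finset.sum_sub_distrib _ _
  -- L on constant multiples
  have hLcm : ∀ (c : ℝ) (f : (Fin m → ℝ) → ℝ), Differentiable ℝ f →
      ∀ x, L (fun y => c * f y) x = c * L f x := by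
    intro c f hf x
    rw [hL, hL]
    have h1 : fderiv ℝ (fun y => c * f y) x = c • fderiv ℝ f x :=
      fderiv_const_mul hf.differentiableAt c
    simp only [h1, ContinuousLinearMap.smul_apply, smul_eq_mul]
    rw [← Finset.mul_sum]
  -- L on coordinate functions
  have hLcoord : ∀ (i : Fin m) (x : Fin m → ℝ), L (fun y => y i) x = 1 := by
    intro i x
    rw [hL]
    have h1 : fderiv ℝ (fun y : Fin m → ℝ => y i) x
        = ContinuousLinearMap.proj (R := ℝ) (φ := fun _ : Fin m => ℝ) i :=
      (ContinuousLinearMap.proj (R := ℝ) (φ := fun _ : Fin m => ℝ) i).fderiv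
    simp [h1, Pi.single_apply]
  intro k t
  -- differentiability of auxiliary combinations
  have dS : Differentiable ℝ (fun y => ∑ j, R j y) :=
    Differentiable.fun_sum (fun j _ => dR j)
  have dG : Differentiable ℝ (fun y => (∑ j, R j y) - 2 * y k) :=
    dS.sub ((dcoord k).const_mul 2)
  -- second derivative computation
  have h0 : L (L (R k)) t
      = L (fun y => ((∑ j, R j y) - 2 * y k) * R k y + 4 * r k y) t := by
    congr 1
    funext x
    exact hRic1 k x
  have e1 : L (fun y => ((∑ j, R j y) - 2 * y k) * R k y + 4 * r k y) t
      = L (fun y => ((∑ j, R j y) - 2 * y k) * R k y) t + L (fun y => 4 * r k y) t :=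
    hLadd _ _ (dG.mul (dR k)) ((dr k).const_mul 4) t
  have e2 : L (fun y => ((∑ j, R j y) - 2 * y k) * R k y) t
      = L (fun y => (∑ j, R j y) - 2 * y k) t * R k t
        + ((∑ j, R j t) - 2 * t k) * L (R k) t :=
    hLmul _ _ dG (dR k) t
  have e3 : L (fun y => (∑ j, R j y) - 2 * y k) t
      = L (fun y => ∑ j, R j y) t - 2 * 1 := by
    rw [hLsub _ _ dS ((dcoord k).const_mul 2) t, hLcm 2 _ (dcoord k) t, hLcoord k t]
  have e4 : L (fun y => ∑ j, R j y) t = ∑ j, L (R j) t := hLsum R dR t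
  have e5 : L (fun y => 4 * r k y) t = 4 * L (r k) t := hLcm 4 (r k) (dr k) t
  have e6 : ∑ j, L (R j) t
      = (∑ i, R i t) * (∑ j, R j t) - 2 * (∑ j, t j * R j t) + 4 * ∑ j, r j t := by
    have : ∀ j : Fin m, L (R j) t
        = (∑ i, R i t) * R j t - 2 * (t j * R j t) + 4 * r j t := by
      intro j; rw [hRic1 j t]; ring
    rw [Finset.sum_congr rfl (fun j _ => this j), Finset.sum_add_distrib,
      Finset.sum_sub_distrib, ← Finset.mul_sum, ← Finset.mul_sum, ← Finset.mul_sum]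
  have e7 : ∑ j, (t k + t j) * R j t
      = t k * (∑ j, R j t) + ∑ j, t j * R j t := by
    have : ∀ j : Fin m, (t k + t j) * R j t = t k * R j t + t j * R j t := by
      intro j; ring
    rw [Finset.sum_congr rfl (fun j _ => this j), Finset.sum_add_distrib,
      ← Finset.mul_sum]
  rw [h0, e1, e2, e3, e4, e5, e6, e7, hRic1 k t, hRic2 k t]
  have hRk := hRne k t
  field_simp
  ring
end

section
/- In the case $m=1$, suppose $\sigma_n=-(r_n+n)R_n-\frac{2r_n^2}{R_n}+2t r_n$, $r_n=\frac12\sigma_n'$, and the identities $r_n^2=\beta_n R_n R_{n-1}$, $\beta_n'=\beta_n(R_{n-1}-R_n)$, $\beta_n=\frac14\sigma_n'+\frac n2$ hold with $R_n\ne 0$, $\beta_n\ne 0$. Then $\sigma_n$ satisfies $(\sigma_n'')^2+4(\sigma_n'+2n)(\sigma_n')^2=4(t\sigma_n'-\sigma_n)^2$. -/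
/-- The `m = 1` case: the logarithmic derivative `σ_n` of the Hankel
determinant satisfies the Jimbo–Miwa–Okamoto σ-form of a particular
Painlevé IV equation. -/
theorem sigma_form_painleve_IV (n : ℕ) (σ r R R1 β : ℝ → ℝ)
    (hσdiff : Differentiable ℝ σ) (hσ'diff : Differentiable ℝ (deriv σ))
    (hRdiff : Differentiable ℝ R) (hR1diff : Differentiable ℝ R1)
    (hrdiff : Differentiable ℝ r) (hβdiff : Differentiable ℝ β)
    (hRne : ∀ t, R t ≠ 0) (hβne : ∀ t, β t ≠ 0)
    (hσ : ∀ t, σ t = -(r t + n) * R t - 2 * (r t) ^ 2 / R t + 2 * t * r t)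
    (hr : ∀ t, r t = (1 / 2) * deriv σ t)
    (hsq : ∀ t, (r t) ^ 2 = β t * R t * R1 t)
    (hβ' : ∀ t, deriv β t = β t * (R1 t - R t))
    (hβ : ∀ t, β t = (1 / 4) * deriv σ t + (n : ℝ) / 2) :
    ∀ t, (deriv (deriv σ) t) ^ 2 + 4 * (deriv σ t + 2 * n) * (deriv σ t) ^ 2 =
      4 * (t * deriv σ t - σ t) ^ 2 := by
  intro t
  have hβfun : β = fun t => (1 / 4) * deriv σ t + (n : ℝ) / 2 := funext hβ
  have hd : deriv β t = (1 / 4) * deriv (deriv σ) t := by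
    rw [hβfun, deriv_add_const]
    exact deriv_const_mul _ (hσ'diff t)
  have hσ'' : deriv (deriv σ) t = 4 * (β t * (R1 t - R t)) := by
    have h := hβ' t
    rw [hd] at h
    linarith
  have hσ' : deriv σ t = 2 * r t := by have := hr t; linarith
  have hn : (n : ℝ) = 2 * β t - r t := by
    have := hβ t; rw [hσ'] at this; linarith
  have hR1 : R1 t = (r t) ^ 2 / (β t * R t) := by
    field_simp [hRne t, hβne t]
    have := hsq t; linarith
  rw [hσ'', hσ', hσ t, hn, hR1]
  field_simp [hRne t, hβne t]
  ring
end

section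
/- Suppose $a_k, b_k$ ($k=1,\dots,m$) are smooth functions of $x$ satisfying the coupled Painlevé IV system $a_k'=-2a_k(\sum_j a_j+b_k-x-c_k)$ and $b_k'=b_k^2+2b_k(\sum_j a_j-x-c_k)+2(\sum_j a_jb_j+n)$, with $a_k$ nowhere zero. Then eliminating $b_k$, each $a_k$ satisfies $a_k''-\frac{(a_k')^2}{2a_k}-4a_k\sum_{j=1}^m a_j\left(\sum_{i=1}^m a_i-x-c_j\right)-2a_k\left(\sum_{j=1}^m a_j-x-c_k\right)^2+2(2n-1)a_k=0$. -/
/-!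
Differentiating `a_k' = -2 a_k (∑ a_j + b_k - x - c_k)` once more and substituting `b_k'` from the
second equation, the sum `∑ a_j b_j` enters through `∑ a_j'` and through `b_k'` with opposite
signs and cancels; the remaining `b_k`-dependence is exactly `(a_k')² / (2 a_k)`.
-/

open Finset

theorem deriv_deriv_eq_of_deriv_eq_const_mul_mul {f g : ℝ → ℝ} {x : ℝ} (r : ℝ)
    (hf : DifferentiableAt ℝ f x) (hg : DifferentiableAt ℝ g x)
    (h : deriv f = fun y => r * f y * g y) :
    deriv (deriv f) x = r * (deriv f x * g x + f x * deriv g x) := by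
  have hfg := (hf.hasDerivAt.const_mul r).fun_mul hg.hasDerivAt
  conv_lhs => rw [h]
  rw [hfg.deriv]
  ring

/-- With the convention `t / 0 = 0`, this holds also at `a = 0`. -/
theorem sq_neg_two_mul_mul_div (a e : ℝ) : (-2 * a * e) ^ 2 / (2 * a) = 2 * a * e ^ 2 := by
  rcases eq_or_ne a 0 with rfl | ha
  · simp
  · field_simp

section CoupledPIV

variable {m : ℕ} {c : Fin m → ℝ} {a b : Fin m → ℝ → ℝ}

theorem sum_deriv_eq_of_coupled_PIV
    (hsys1 : ∀ k x, deriv (a k) x = -2 * a k x * ((∑ j, a j x) + b k x - x - c k)) (x : ℝ) :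
    ∑ j, deriv (a j) x =
      -2 * ∑ j, a j x * ((∑ i, a i x) - x - c j) - 2 * ∑ j, a j x * b j x := by
  simp only [hsys1, mul_sum, ← sum_sub_distrib]
  exact sum_congr rfl fun j _ => by ring

theorem deriv_deriv_eq_of_coupled_PIV
    (hadiff : ∀ k, Differentiable ℝ (a k)) (hbdiff : ∀ k, Differentiable ℝ (b k))
    (hsys1 : ∀ k x, deriv (a k) x = -2 * a k x * ((∑ j, a j x) + b k x - x - c k))
    (k : Fin m) (x : ℝ) :
    deriv (deriv (a k)) x = -2 * (deriv (a k) x * ((∑ j, a j x) + b k x - x - c k)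
      + a k x * ((∑ j, deriv (a j) x) + deriv (b k) x - 1)) := by
  have hg : HasDerivAt (fun y => (∑ j, a j y) + b k y - y - c k)
      ((∑ j, deriv (a j) x) + deriv (b k) x - 1) x := by
    have hsum := HasDerivAt.fun_sum fun j (_ : j ∈ univ) => (hadiff j x).hasDerivAt
    simpa using ((hsum.add (hbdiff k x).hasDerivAt).sub (hasDerivAt_id x)).sub_const (c k)
  rw [deriv_deriv_eq_of_deriv_eq_const_mul_mul (-2) (hadiff k x) hg.differentiableAt
    (funext (hsys1 k)), hg.deriv]

end CoupledPIV

theorem coupled_PIV_eliminate_b_general (m n : ℕ) (c : Fin m → ℝ)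
    (a b : Fin m → ℝ → ℝ)
    (hadiff : ∀ k, Differentiable ℝ (a k)) (hbdiff : ∀ k, Differentiable ℝ (b k))
    (hsys1 : ∀ k x, deriv (a k) x =
      -2 * a k x * ((∑ j, a j x) + b k x - x - c k))
    (hsys2 : ∀ k x, deriv (b k) x =
      (b k x) ^ 2 + 2 * b k x * ((∑ j, a j x) - x - c k)
        + 2 * ((∑ j, a j x * b j x) + n)) :
    ∀ k x, deriv (deriv (a k)) x - (deriv (a k) x) ^ 2 / (2 * a k x)
      - 4 * a k x * (∑ j, a j x * ((∑ i, a i x) - x - c j))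
      - 2 * a k x * ((∑ j, a j x) - x - c k) ^ 2
      + 2 * (2 * (n : ℝ) - 1) * a k x = 0 := by
  intro k x
  rw [deriv_deriv_eq_of_coupled_PIV hadiff hbdiff hsys1, sum_deriv_eq_of_coupled_PIV hsys1,
    hsys2, hsys1, sq_neg_two_mul_mul_div]
  ring

/-- Eliminating `b_k` from the coupled Painlevé IV system yields a
second-order ODE for each `a_k`. -/
theorem coupled_PIV_eliminate_b (m n : ℕ) (c : Fin m → ℝ)
    (a b : Fin m → ℝ → ℝ)
    (hadiff : ∀ k, Differentiable ℝ (a k)) (hbdiff : ∀ k, Differentiable ℝ (b k))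
    (hane : ∀ k x, a k x ≠ 0)
    (hsys1 : ∀ k x, deriv (a k) x =
      -2 * a k x * ((∑ j, a j x) + b k x - x - c k))
    (hsys2 : ∀ k x, deriv (b k) x =
      (b k x) ^ 2 + 2 * b k x * ((∑ j, a j x) - x - c k)
        + 2 * ((∑ j, a j x * b j x) + n)) :
    ∀ k x, deriv (deriv (a k)) x - (deriv (a k) x) ^ 2 / (2 * a k x)
      - 4 * a k x * (∑ j, a j x * ((∑ i, a i x) - x - c j))
      - 2 * a k x * ((∑ j, a j x) - x - c k) ^ 2
      + 2 * (2 * (n : ℝ) - 1) * a k x = 0 :=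
  coupled_PIV_eliminate_b_general m n c a b hadiff hbdiff hsys1 hsys2
end
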